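/- Let χ²(n) denote a chi-squared random variable with n degrees of freedom. Then for any z > 0, P(sqrt(χ²(n)/n) - 1 > z) ≤ exp(-n z² / 2). -/

import Mathlib

/-! A Chernoff bound. For `t < 1/2` a squared standard normal has
`E exp (t X²) = (1 - 2t)^(-1/2)`, so `P(χ²(n) ≥ n a) ≤ exp (-t n a) (1 - 2t)^(-n/2)`; the choice
`t = (a - 1) / (2a)` turns this into `exp (-n (a - 1 - log a) / 2)`. For `a = (1 + z)²` the event
contains `√(χ²(n)/n) - 1 > z`, and `a - 1 - log a ≥ z²` because `log (1 + z) ≤ z`. -/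

open MeasureTheory ProbabilityTheory Real

lemma integral_exp_mul_sq_gaussianReal {t : ℝ} (ht : t < 1 / 2) :
    ∫ x, exp (t * x ^ 2) ∂gaussianReal 0 1 = (√(1 - 2 * t))⁻¹ := by
  have hdensity : (fun x ↦ gaussianPDFReal 0 1 x • exp (t * x ^ 2))
      = fun x ↦ (√(2 * π))⁻¹ * exp (-(1 / 2 - t) * x ^ 2) := by
    ext x
    simp only [gaussianPDFReal, NNReal.coe_one, mul_one, sub_zero, smul_eq_mul]
    rw [mul_assoc, ← exp_add]
    ring_nf
  have hscale : π / (1 / 2 - t) = 2 * π / (1 - 2 * t) := by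
    rw [div_eq_div_iff (by linarith) (by linarith)]
    ring
  rw [integral_gaussianReal_eq_integral_smul one_ne_zero, hdensity, integral_const_mul,
    integral_gaussian, hscale, sqrt_div' _ (by linarith), div_eq_mul_inv, ← mul_assoc,
    inv_mul_cancel₀ (by positivity), one_mul]

section

variable {Ω ι : Type*} [MeasurableSpace Ω] {μ : Measure Ω}

lemma mgf_sq_of_map_eq_gaussianReal {X : Ω → ℝ} (hX : μ.map X = gaussianReal 0 1) {t : ℝ}
    (ht : t < 1 / 2) :
    mgf (fun ω ↦ X ω ^ 2) μ t = (√(1 - 2 * t))⁻¹ := by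
  have hXm : AEMeasurable X μ := .of_map_ne_zero (by rw [hX]; exact NeZero.ne _)
  rw [← integral_exp_mul_sq_gaussianReal ht, ← hX, ← mgf, mgf_map hXm (by fun_prop)]
  rfl

lemma mgf_sum_sq_of_iIndepFun_gaussianReal [Fintype ι] {Z : ι → Ω → ℝ} (hindep : iIndepFun Z μ)
    (hgauss : ∀ i, μ.map (Z i) = gaussianReal 0 1) {t : ℝ} (ht : t < 1 / 2) :
    mgf (fun ω ↦ ∑ i, Z i ω ^ 2) μ t = (√(1 - 2 * t))⁻¹ ^ Fintype.card ι := by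
  have hZm (i : ι) : AEMeasurable (Z i) μ :=
    .of_map_ne_zero (by rw [hgauss i]; exact NeZero.ne _)
  have hsq := (hindep.comp (fun _ x ↦ x ^ 2) fun _ ↦ by fun_prop).mgf_sum₀
    (fun i ↦ (hZm i).pow_const 2) (t := t) Finset.univ
  convert hsq using 2
  · ext ω
    simp [Finset.sum_apply]
  · simp [Function.comp_def, mgf_sq_of_map_eq_gaussianReal (hgauss _) ht]

lemma measureReal_card_mul_le_sum_sq_le [IsProbabilityMeasure μ] [Fintype ι]
    {Z : ι → Ω → ℝ} (hindep : iIndepFun Z μ) (hgauss : ∀ i, μ.map (Z i) = gaussianReal 0 1)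
    {a : ℝ} (ha : 1 ≤ a) :
    μ.real {ω | Fintype.card ι * a ≤ ∑ i, Z i ω ^ 2}
      ≤ exp (-Fintype.card ι * (a - 1 - log a) / 2) := by
  set n := Fintype.card ι
  set t := (a - 1) / (2 * a)
  have ha₀ : 0 < a := by linarith
  have ht₀ : 0 ≤ t := div_nonneg (by linarith) (by positivity)
  have ht : t < 1 / 2 := by
    rw [div_lt_iff₀ (by positivity)]
    linarith
  have hmgf : mgf (fun ω ↦ ∑ i, Z i ω ^ 2) μ t = exp (n * (log a / 2)) := by
    have h : 1 - 2 * t = a⁻¹ := by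
      simp only [t]
      field_simp
      ring
    rw [mgf_sum_sq_of_iIndepFun_gaussianReal hindep hgauss ht, h, sqrt_inv, inv_inv,
      exp_nat_mul, ← log_sqrt ha₀.le, exp_log (sqrt_pos.2 ha₀)]
  -- a non-integrable function has integral `0`, so a positive mgf is an integrable one
  have hint : Integrable (fun ω ↦ exp (t * ∑ i, Z i ω ^ 2)) μ :=
    mgf_pos_iff.1 (by rw [hmgf]; positivity)
  calc μ.real {ω | n * a ≤ ∑ i, Z i ω ^ 2}
      ≤ exp (-t * (n * a)) * mgf (fun ω ↦ ∑ i, Z i ω ^ 2) μ t :=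
        measure_ge_le_exp_mul_mgf _ ht₀ hint
    _ = exp (-n * (a - 1 - log a) / 2) := by
      rw [hmgf, ← exp_add]
      congr 1
      simp only [t]
      field_simp
      ring

lemma sq_le_one_add_sq_sub_one_sub_log {z : ℝ} (hz : -1 < z) :
    z ^ 2 ≤ (1 + z) ^ 2 - 1 - log ((1 + z) ^ 2) := by
  have h := log_le_sub_one_of_pos (show 0 < 1 + z by linarith)
  rw [log_pow]
  push_cast
  nlinarith

end

lemma nat_mul_sq_lt_of_lt_sqrt_div {n : ℕ} {c s : ℝ} (hc : 0 ≤ c) (h : c < √(s / n)) :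
    n * c ^ 2 < s := by
  have hlt : c ^ 2 < s / n := (lt_sqrt hc).1 h
  -- for `n = 0` the quotient is `0` by convention, so `hlt` rules this case out
  have hn : (0 : ℝ) < n := by
    rcases n.eq_zero_or_pos with rfl | hn
    · rw [Nat.cast_zero, div_zero] at hlt
      exact absurd hlt (not_lt.2 (sq_nonneg _))
    · exact_mod_cast hn
  rw [mul_comm]
  exact (lt_div_iff₀ hn).1 hlt

theorem stmt_5_general {n : ℕ} {Ωs : Type*} [MeasurableSpace Ωs] (μ : Measure Ωs)
    [IsProbabilityMeasure μ]
    (Z : Fin n → Ωs → ℝ)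
    (hindep : iIndepFun Z μ)
    (hgauss : ∀ i, Measure.map (Z i) μ = gaussianReal 0 1)
    (z : ℝ) (hz : 0 < z) :
    μ {ω | Real.sqrt ((∑ i, Z i ω ^ 2) / n) - 1 > z}
      ≤ ENNReal.ofReal (Real.exp (-(n : ℝ) * z ^ 2 / 2)) := by
  have hsub : {ω | √((∑ i, Z i ω ^ 2) / n) - 1 > z}
      ⊆ {ω | Fintype.card (Fin n) * (1 + z) ^ 2 ≤ ∑ i, Z i ω ^ 2} := fun ω hω ↦ by
    rw [Set.mem_ofPred_eq, Fintype.card_fin]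
    rw [Set.mem_ofPred_eq] at hω
    exact (nat_mul_sq_lt_of_lt_sqrt_div (by linarith) (by linarith)).le
  have hexponent : -(n : ℝ) * ((1 + z) ^ 2 - 1 - log ((1 + z) ^ 2)) / 2 ≤ -n * z ^ 2 / 2 := by
    have := sq_le_one_add_sq_sub_one_sub_log (show -1 < z by linarith)
    have : (0 : ℝ) ≤ n := n.cast_nonneg
    nlinarith
  calc μ {ω | √((∑ i, Z i ω ^ 2) / n) - 1 > z}
      ≤ μ {ω | Fintype.card (Fin n) * (1 + z) ^ 2 ≤ ∑ i, Z i ω ^ 2} := measure_mono hsub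
    _ = ENNReal.ofReal (μ.real {ω | Fintype.card (Fin n) * (1 + z) ^ 2 ≤ ∑ i, Z i ω ^ 2}) :=
        (ofReal_measureReal (measure_ne_top _ _)).symm
    _ ≤ ENNReal.ofReal (exp (-n * z ^ 2 / 2)) := by
      gcongr
      refine (measureReal_card_mul_le_sum_sq_le hindep hgauss (by nlinarith)).trans ?_
      rw [Fintype.card_fin]
      exact exp_le_exp.2 hexponent

/-- Chi-squared tail bound: if `χ²(n)` is the sum of squares of `n` i.i.d. standard normals,
then for any `z > 0`, `P(√(χ²(n)/n) - 1 > z) ≤ exp (-n z² / 2)`. -/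
theorem stmt_5 {n : ℕ} {Ωs : Type*} [MeasurableSpace Ωs] (μ : Measure Ωs)
    [IsProbabilityMeasure μ]
    (Z : Fin n → Ωs → ℝ) (hmeas : ∀ i, Measurable (Z i))
    (hindep : iIndepFun Z μ)
    (hgauss : ∀ i, Measure.map (Z i) μ = gaussianReal 0 1)
    (z : ℝ) (hz : 0 < z) :
    μ {ω | Real.sqrt ((∑ i, Z i ω ^ 2) / n) - 1 > z}
      ≤ ENNReal.ofReal (Real.exp (-(n : ℝ) * z ^ 2 / 2)) :=
  stmt_5_general μ Z hindep hgauss z hz
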